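/- arXiv:2107.08927 — 5 statements merged into one kernel-verified Lean document; each statement's English description precedes it below -/
import Mathlib

section
/- For all σ, σ' > 0, the improper integral over λ ∈ (0,∞) of the difference between the limiting matched-SNR mismatched MSE and the limiting MMSE satisfies ∫₀^∞ [MSE∞(σ,σ',λ,λ) − MMSE∞(σ,λ)] dλ = 4·D_KL(N(0,σ²) ‖ N(0,σ'²)) = 4 ln(σ'/σ) + 2σ²/σ'² − 2. -/
open MeasureTheory ProbabilityTheory Filter Matrix

noncomputable section

/-- The limiting mismatched MSE formula, eq. (4) of the paper. -/
def MSElim (sig sig' lam lam' : ℝ) : ℝ :=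
  if lam ≤ 1 / sig ^ 4 ∧ 1 / sig' ^ 4 ≤ lam' then
    sig ^ 4 + (1 / Real.sqrt lam' - 1 / (lam' * sig' ^ 2)) ^ 2
  else if 1 / sig ^ 4 ≤ lam ∧ 1 / (sig ^ 2 * sig' ^ 2) ≤ Real.sqrt (lam * lam') then
    sig ^ 4 * (1 - Real.sqrt (lam / lam')) ^ 2 + 2 / Real.sqrt (lam * lam') +
      1 / (lam' ^ 2 * sig' ^ 4) +
      (2 * sig ^ 2 / (lam' * sig' ^ 2)) * (1 - Real.sqrt (lam / lam')) -
      2 / (lam * lam' * sig ^ 2 * sig' ^ 2)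
  else sig ^ 4

/-- The limiting MMSE formula. -/
def MMSElim (sig lam : ℝ) : ℝ :=
  if lam ≤ 1 / sig ^ 4 then sig ^ 4 else 2 / lam - 1 / (lam ^ 2 * sig ^ 4)

/-!
On each of the ranges cut out by `1/σ⁴`, `1/σ'⁴` and their geometric mean `1/(σ²σ'²)`, the
matched-SNR excess `MSE∞(σ,σ',λ,λ) − MMSE∞(σ,λ)` is elementary: it vanishes below the smallest
breakpoint, equals `(λ^(-1/2) − 1/(λσ'²))²` (when `σ ≤ σ'`) or `(σ² − 1/(λσ²))²` (when `σ' ≤ σ`)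
up to the largest one, and `(1/σ'² − 1/σ²)²/λ²` beyond it. Every piece has an elementary
antiderivative, and the logarithms at the breakpoints produce the term `4 log(σ'/σ)`.
-/

open Set Real

lemma setIntegral_Ioi_zero_eq_of_eqOn {f g h : ℝ → ℝ} {p q : ℝ} (hp : 0 ≤ p) (hpq : p ≤ q)
    (hf0 : EqOn f 0 (Ioo 0 p)) (hfg : EqOn f g (Ioo p q)) (hfh : EqOn f h (Ioi q))
    (hg : IntervalIntegrable g volume p q) (hh : IntegrableOn h (Ioi q)) :
    ∫ x in Ioi 0, f x = (∫ x in p..q, g x) + ∫ x in Ioi q, h x := by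
  have hg' : IntegrableOn g (Ioo p q) :=
    ((intervalIntegrable_iff_integrableOn_Ioc_of_le hpq).1 hg).mono_set Ioo_subset_Ioc_self
  have hf_zero : IntegrableOn f (Ioc 0 p) :=
    (integrableOn_Ioc_iff_integrableOn_Ioo).2
      (integrableOn_zero.congr_fun hf0.symm measurableSet_Ioo)
  have hf_mid : IntegrableOn f (Ioc p q) :=
    (integrableOn_Ioc_iff_integrableOn_Ioo).2 (hg'.congr_fun hfg.symm measurableSet_Ioo)
  have hf_tail : IntegrableOn f (Ioi q) := hh.congr_fun hfh.symm measurableSet_Ioi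
  have hf_Ioi : IntegrableOn f (Ioi p) := by
    rw [← Ioc_union_Ioi_eq_Ioi hpq]; exact hf_mid.union hf_tail
  rw [← Ioc_union_Ioi_eq_Ioi hp,
    setIntegral_union Ioc_disjoint_Ioi_same measurableSet_Ioi hf_zero hf_Ioi,
    ← Ioc_union_Ioi_eq_Ioi hpq,
    setIntegral_union Ioc_disjoint_Ioi_same measurableSet_Ioi hf_mid hf_tail,
    integral_Ioc_eq_integral_Ioo, setIntegral_eq_zero_of_forall_eq_zero hf0,
    integral_Ioc_eq_integral_Ioo, setIntegral_congr_fun measurableSet_Ioo hfg,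
    setIntegral_congr_fun measurableSet_Ioi hfh, intervalIntegral.integral_of_le hpq,
    integral_Ioc_eq_integral_Ioo, zero_add]

lemma div_sq_eqOn_mul_rpow (K : ℝ) :
    EqOn (fun x : ℝ => K / x ^ 2) (fun x => K * x ^ (-2 : ℝ)) (Ioi 0) := fun x hx => by
  simp only [rpow_neg (le_of_lt hx), div_eq_mul_inv, rpow_ofNat]

lemma integrableOn_Ioi_div_sq (K : ℝ) {a : ℝ} (ha : 0 < a) :
    IntegrableOn (fun x : ℝ => K / x ^ 2) (Ioi a) :=
  IntegrableOn.congr_fun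
    ((integrableOn_Ioi_rpow_of_lt (by norm_num : (-2 : ℝ) < -1) ha).const_mul K)
    ((div_sq_eqOn_mul_rpow K).mono (Ioi_subset_Ioi ha.le)).symm measurableSet_Ioi

lemma integral_Ioi_div_sq (K : ℝ) {a : ℝ} (ha : 0 < a) :
    ∫ x in Ioi a, K / x ^ 2 = K / a := by
  rw [setIntegral_congr_fun measurableSet_Ioi
      ((div_sq_eqOn_mul_rpow K).mono (Ioi_subset_Ioi ha.le)),
    integral_const_mul, integral_Ioi_rpow_of_lt (by norm_num : (-2 : ℝ) < -1) ha,
    show (-2 : ℝ) + 1 = -1 by norm_num, rpow_neg_one]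
  ring

lemma pos_of_mem_uIcc {a b x : ℝ} (ha : 0 < a) (hb : 0 < b) (hx : x ∈ uIcc a b) : 0 < x :=
  (lt_min ha hb).trans_le hx.1

lemma intervalIntegrable_sq_inv_sqrt_sub_inv {a b c : ℝ} (ha : 0 < a) (hb : 0 < b) (hc : c ≠ 0) :
    IntervalIntegrable (fun x => (1 / √x - 1 / (x * c)) ^ 2) volume a b := by
  refine ContinuousOn.intervalIntegrable fun x hx => ?_
  have hx0 := pos_of_mem_uIcc ha hb hx
  have hsx : √x ≠ 0 := (sqrt_pos.2 hx0).ne'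
  fun_prop (disch := first | exact hsx | exact mul_ne_zero hx0.ne' hc)

lemma integral_sq_inv_sqrt_sub_inv {a b c : ℝ} (ha : 0 < a) (hb : 0 < b) (hc : c ≠ 0) :
    ∫ x in a..b, (1 / √x - 1 / (x * c)) ^ 2 =
      (log b + 4 / (c * √b) - 1 / (c ^ 2 * b)) - (log a + 4 / (c * √a) - 1 / (c ^ 2 * a)) := by
  refine intervalIntegral.integral_eq_sub_of_hasDerivAt
    (f := fun x => log x + 4 / (c * √x) - 1 / (c ^ 2 * x)) (fun x hx => ?_)
    (intervalIntegrable_sq_inv_sqrt_sub_inv ha hb hc)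
  have hx0 := pos_of_mem_uIcc ha hb hx
  have hsx : √x ≠ 0 := (sqrt_pos.2 hx0).ne'
  have hsqrt : HasDerivAt (fun y => 4 * (c * √y)⁻¹) _ x :=
    (((hasDerivAt_sqrt hx0.ne').const_mul c).inv (mul_ne_zero hc hsx)).const_mul 4
  have hinv : HasDerivAt (fun y => 1 * (c ^ 2 * y)⁻¹) _ x :=
    (((hasDerivAt_id x).const_mul (c ^ 2)).inv (by simp [hc, hx0.ne'])).const_mul 1
  convert ((hasDerivAt_log hx0.ne').add hsqrt).sub hinv using 1
  · ext y
    simp only [Pi.add_apply, Pi.sub_apply, div_eq_mul_inv, one_mul]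
  · obtain ⟨t, ht, rfl⟩ : ∃ t, 0 < t ∧ x = t ^ 2 := ⟨√x, sqrt_pos.2 hx0, (sq_sqrt hx0.le).symm⟩
    rw [sqrt_sq ht.le, id]
    field_simp
    ring

lemma intervalIntegrable_sq_sub_inv {a b s : ℝ} (ha : 0 < a) (hb : 0 < b) (hs : s ≠ 0) :
    IntervalIntegrable (fun x => (s - 1 / (x * s)) ^ 2) volume a b := by
  refine ContinuousOn.intervalIntegrable fun x hx => ?_
  have hx0 := pos_of_mem_uIcc ha hb hx
  fun_prop (disch := exact mul_ne_zero hx0.ne' hs)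

lemma integral_sq_sub_inv {a b s : ℝ} (ha : 0 < a) (hb : 0 < b) (hs : s ≠ 0) :
    ∫ x in a..b, (s - 1 / (x * s)) ^ 2 =
      (s ^ 2 * b - 2 * log b - 1 / (s ^ 2 * b)) - (s ^ 2 * a - 2 * log a - 1 / (s ^ 2 * a)) := by
  refine intervalIntegral.integral_eq_sub_of_hasDerivAt
    (f := fun x => s ^ 2 * x - 2 * log x - 1 / (s ^ 2 * x)) (fun x hx => ?_)
    (intervalIntegrable_sq_sub_inv ha hb hs)
  have hx0 := pos_of_mem_uIcc ha hb hx
  have hlin : HasDerivAt (fun y => s ^ 2 * y) _ x := (hasDerivAt_id x).const_mul (s ^ 2)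
  have hlog : HasDerivAt (fun y => 2 * log y) _ x := (hasDerivAt_log hx0.ne').const_mul 2
  have hinv : HasDerivAt (fun y => 1 * (s ^ 2 * y)⁻¹) _ x :=
    (((hasDerivAt_id x).const_mul (s ^ 2)).inv (by simp [hs, hx0.ne'])).const_mul 1
  convert (hlin.sub hlog).sub hinv using 1
  · ext y
    simp only [Pi.sub_apply, div_eq_mul_inv, one_mul]
  · simp only [id]
    field_simp
    ring

def matchedExcess (sig sig' lam : ℝ) : ℝ := MSElim sig sig' lam lam - MMSElim sig lam

lemma matchedExcess_eq_zero {sig sig' x : ℝ} (hx : x < 1 / sig ^ 4) (hx' : x < 1 / sig' ^ 4) :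
    matchedExcess sig sig' x = 0 := by
  rw [matchedExcess, MSElim, MMSElim, if_neg fun h => hx'.not_ge h.2,
    if_neg fun h => hx.not_ge h.1, if_pos hx.le, sub_self]

lemma matchedExcess_eq_of_le_of_le {sig sig' x : ℝ} (hx' : 1 / sig' ^ 4 ≤ x)
    (hx : x ≤ 1 / sig ^ 4) :
    matchedExcess sig sig' x = (1 / √x - 1 / (x * sig' ^ 2)) ^ 2 := by
  rw [matchedExcess, MSElim, MMSElim, if_pos ⟨hx, hx'⟩, if_pos hx, add_sub_cancel_left]

lemma matchedExcess_eq_of_lt_of_lt {sig sig' x : ℝ} (hsig : sig ≠ 0)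
    (hcrit : 1 / (sig ^ 2 * sig' ^ 2) ≤ 1 / sig' ^ 4)
    (hx : 1 / sig ^ 4 < x) (hx' : x < 1 / (sig ^ 2 * sig' ^ 2)) :
    matchedExcess sig sig' x = (sig ^ 2 - 1 / (x * sig ^ 2)) ^ 2 := by
  have hx0 : 0 < x := lt_of_le_of_lt (by positivity) hx
  rw [matchedExcess, MSElim, MMSElim, if_neg fun h => (hx'.trans_le hcrit).not_ge h.2,
    sqrt_mul_self hx0.le, if_neg fun h => hx'.not_ge h.2, if_neg hx.not_ge]
  field_simp
  ring

lemma matchedExcess_eq_div_sq {sig sig' x : ℝ} (hsig : sig ≠ 0) (hsig' : sig' ≠ 0)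
    (hx : 1 / sig ^ 4 < x) (hx' : 1 / (sig ^ 2 * sig' ^ 2) ≤ x) :
    matchedExcess sig sig' x = (1 / sig' ^ 2 - 1 / sig ^ 2) ^ 2 / x ^ 2 := by
  have hx0 : 0 < x := lt_of_le_of_lt (by positivity) hx
  rw [matchedExcess, MSElim, MMSElim, if_neg fun h => hx.not_ge h.1, sqrt_mul_self hx0.le,
    if_pos ⟨hx.le, hx'⟩, if_neg hx.not_ge, div_self hx0.ne', sqrt_one]
  field_simp
  ring

lemma log_one_div_pow_four (s : ℝ) : log (1 / s ^ 4) = -(4 * log s) := by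
  rw [one_div, log_inv, log_pow, Nat.cast_ofNat]

lemma setIntegral_matchedExcess_of_le {sig sig' : ℝ} (hsig : 0 < sig) (hle : sig ≤ sig') :
    ∫ x in Ioi 0, matchedExcess sig sig' x =
      4 * (log (sig' / sig) + sig ^ 2 / (2 * sig' ^ 2) - 1 / 2) := by
  have hsig' : 0 < sig' := hsig.trans_le hle
  have hpq : 1 / sig' ^ 4 ≤ 1 / sig ^ 4 := by gcongr
  have hcrit : 1 / (sig ^ 2 * sig' ^ 2) ≤ 1 / sig ^ 4 := by
    rw [show sig ^ 4 = sig ^ 2 * sig ^ 2 by ring]; gcongr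
  have hsqrt : ∀ s : ℝ, √(1 / s ^ 4) = 1 / s ^ 2 := fun s => by
    rw [show 1 / s ^ 4 = (1 / s ^ 2) ^ 2 by ring, sqrt_sq (by positivity)]
  rw [setIntegral_Ioi_zero_eq_of_eqOn (by positivity) hpq
      (fun x hx => matchedExcess_eq_zero (hx.2.trans_le hpq) hx.2)
      (fun x hx => matchedExcess_eq_of_le_of_le hx.1.le hx.2.le)
      (fun x hx => matchedExcess_eq_div_sq hsig.ne' hsig'.ne' hx (hcrit.trans hx.le))
      (intervalIntegrable_sq_inv_sqrt_sub_inv (by positivity) (by positivity) (by positivity))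
      (integrableOn_Ioi_div_sq _ (by positivity)),
    integral_sq_inv_sqrt_sub_inv (by positivity) (by positivity) (by positivity),
    integral_Ioi_div_sq _ (by positivity), hsqrt, hsqrt, log_one_div_pow_four,
    log_one_div_pow_four, log_div hsig'.ne' hsig.ne']
  field_simp
  ring

lemma setIntegral_matchedExcess_of_ge {sig sig' : ℝ} (hsig' : 0 < sig') (hge : sig' ≤ sig) :
    ∫ x in Ioi 0, matchedExcess sig sig' x =
      4 * (log (sig' / sig) + sig ^ 2 / (2 * sig' ^ 2) - 1 / 2) := by
  have hsig : 0 < sig := hsig'.trans_le hge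
  have hpq : 1 / sig ^ 4 ≤ 1 / (sig ^ 2 * sig' ^ 2) := by
    rw [show sig ^ 4 = sig ^ 2 * sig ^ 2 by ring]; gcongr
  have hcrit : 1 / (sig ^ 2 * sig' ^ 2) ≤ 1 / sig' ^ 4 := by
    rw [show sig' ^ 4 = sig' ^ 2 * sig' ^ 2 by ring]; gcongr
  have hlog : log (1 / (sig ^ 2 * sig' ^ 2)) = -(2 * log sig + 2 * log sig') := by
    rw [one_div, log_inv, log_mul (by positivity) (by positivity), log_pow, log_pow,
      Nat.cast_ofNat]
  rw [setIntegral_Ioi_zero_eq_of_eqOn (by positivity) hpq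
      (fun x hx => matchedExcess_eq_zero hx.2 (hx.2.trans_le (hpq.trans hcrit)))
      (fun x hx => matchedExcess_eq_of_lt_of_lt hsig.ne' hcrit hx.1 hx.2)
      (fun x hx => matchedExcess_eq_div_sq hsig.ne' hsig'.ne' (hpq.trans_lt hx) hx.le)
      (intervalIntegrable_sq_sub_inv (by positivity) (by positivity) (by positivity))
      (integrableOn_Ioi_div_sq _ (by positivity)),
    integral_sq_sub_inv (by positivity) (by positivity) (by positivity),
    integral_Ioi_div_sq _ (by positivity), hlog, log_one_div_pow_four, log_div hsig'.ne' hsig.ne']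
  field_simp
  ring

/-- Sum rule: the integral over `λ ∈ (0,∞)` of the excess limiting
matched-SNR MSE over the limiting MMSE equals four times the Kullback–Leibler
divergence `D_KL(N(0,σ²) ‖ N(0,σ'²)) = ln(σ'/σ) + σ²/(2σ'²) − ½`. -/
theorem mse_mmse_sum_rule (sig sig' : ℝ) (hsig : 0 < sig) (hsig' : 0 < sig') :
    (∫ lam in Set.Ioi (0 : ℝ), (MSElim sig sig' lam lam - MMSElim sig lam)) =
        4 * (Real.log (sig' / sig) + sig ^ 2 / (2 * sig' ^ 2) - 1 / 2) ∧
      4 * (Real.log (sig' / sig) + sig ^ 2 / (2 * sig' ^ 2) - 1 / 2) =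
        4 * Real.log (sig' / sig) + 2 * sig ^ 2 / sig' ^ 2 - 2 := by
  refine ⟨?_, by ring⟩
  change ∫ lam in Ioi 0, matchedExcess sig sig' lam = _
  rcases le_total sig sig' with hle | hge
  · exact setIntegral_matchedExcess_of_le hsig hle
  · exact setIntegral_matchedExcess_of_ge hsig' hge

end
end

section
/- For every fixed σ, λ > 0, the limiting mismatched MSE formula (λ',σ') ↦ MSE∞(σ,σ',λ,λ') is a continuous function on (0,∞)²; in particular the phase transitions of the limiting MSE are continuous phase transitions. -/
/-
For fixed `λ`, the formula switches branch along a single curve in the `(λ', σ')` quadrant.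
If `λ ≤ σ⁻⁴` the middle branch is never taken (at `λ = σ⁻⁴` its condition reduces to
`λ'σ'⁴ ≥ 1`, the condition of the first branch), so `MSE∞` is `σ⁴ + (1/√λ' - 1/(λ'σ'²))²`
for `λ'σ'⁴ ≥ 1` and `σ⁴` otherwise; if `λ > σ⁻⁴` it is the middle formula for
`√(λλ')σ²σ'² ≥ 1` and `σ⁴` otherwise. Each branch is continuous on the open quadrant and both
sides agree on the switching curve, so the piecewise function is continuous.
-/

open MeasureTheory ProbabilityTheory Filter Matrix

noncomputable section

theorem ContinuousOn.if_le {α β γ : Type*} [TopologicalSpace α] [TopologicalSpace β]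
    [LinearOrder β] [OrderClosedTopology β] [TopologicalSpace γ] {s : Set α}
    {f g : α → β} {f' g' : α → γ} [∀ x, Decidable (f x ≤ g x)]
    (hf' : ContinuousOn f' s) (hg' : ContinuousOn g' s) (hf : ContinuousOn f s)
    (hg : ContinuousOn g s) (hfg : ∀ x ∈ s, f x = g x → f' x = g' x) :
    ContinuousOn (fun x => if f x ≤ g x then f' x else g' x) s := by
  simp only [continuousOn_iff_continuous_domRestrict] at *
  exact Continuous.if_le hf' hg' hf hg fun x => hfg x x.2

lemma one_div_sqrt_sub_one_div_mul_sq_eq_zero {x y : ℝ} (h : x = 1 / y ^ 4) :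
    1 / Real.sqrt x - 1 / (x * y ^ 2) = 0 := by
  rw [h, show 1 / y ^ 4 = (1 / y ^ 2) ^ 2 by ring, Real.sqrt_sq (by positivity)]
  rcases eq_or_ne y 0 with rfl | hy
  · simp
  · field_simp
    ring

namespace MSElim

variable {sig sig' lam lam' : ℝ}

/- With `m = √(λλ')` the formula is `(σ²(1 - m/λ') + 1/(λ'σ'²))² + (2/m)(1 - 1/(mσ²σ'²))`;
at the threshold `mσ²σ'² = 1` the bracket is `σ²` and the second term vanishes. -/
lemma second_branch_eq_of_threshold (hlam : 0 < lam) (hlam' : 0 < lam')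
    (h : 1 / (sig ^ 2 * sig' ^ 2) = Real.sqrt (lam * lam')) :
    sig ^ 4 * (1 - Real.sqrt (lam / lam')) ^ 2 + 2 / Real.sqrt (lam * lam') +
      1 / (lam' ^ 2 * sig' ^ 4) +
      (2 * sig ^ 2 / (lam' * sig' ^ 2)) * (1 - Real.sqrt (lam / lam')) -
      2 / (lam * lam' * sig ^ 2 * sig' ^ 2) = sig ^ 4 := by
  set m := Real.sqrt (lam * lam')
  have hm_pos : 0 < m := Real.sqrt_pos.mpr (by positivity)
  have hm_sq : lam * lam' = m ^ 2 := (Real.sq_sqrt (by positivity)).symm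
  obtain ⟨hsig, hsig'⟩ : sig ≠ 0 ∧ sig' ≠ 0 := by
    have h0 : sig ^ 2 * sig' ^ 2 ≠ 0 := (one_div_pos.mp (h ▸ hm_pos)).ne'
    simpa [not_or] using h0
  have hdiv : Real.sqrt (lam / lam') = m / lam' := by
    rw [show lam / lam' = lam * lam' / lam' ^ 2 by field_simp, Real.sqrt_div' _ (sq_nonneg _),
      Real.sqrt_sq hlam'.le]
  have hsig'_sq : sig' ^ 2 = 1 / (m * sig ^ 2) := by
    rw [← h]
    field_simp
  rw [hdiv, hm_sq, show sig' ^ 4 = (sig' ^ 2) ^ 2 by ring, hsig'_sq]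
  field_simp
  ring

lemma eq_ite_of_le (hsig : sig ≠ 0) (hsig' : sig' ≠ 0) (hlam : lam ≤ 1 / sig ^ 4) :
    MSElim sig sig' lam lam' = if 1 / sig' ^ 4 ≤ lam' then
      sig ^ 4 + (1 / Real.sqrt lam' - 1 / (lam' * sig' ^ 2)) ^ 2 else sig ^ 4 := by
  by_cases hlow : 1 / sig' ^ 4 ≤ lam'
  · rw [MSElim, if_pos ⟨hlam, hlow⟩, if_pos hlow]
  rw [MSElim, if_neg (fun h => hlow h.2), if_neg hlow, ite_eq_right_iff, and_imp]
  intro hge hsqrt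
  refine absurd ?_ hlow
  rw [le_antisymm hlam hge, Real.le_sqrt' (by positivity)] at hsqrt
  calc 1 / sig' ^ 4 = sig ^ 4 * (1 / (sig ^ 2 * sig' ^ 2)) ^ 2 := by field_simp
    _ ≤ sig ^ 4 * (1 / sig ^ 4 * lam') := by gcongr
    _ = lam' := by field_simp

lemma eq_ite_of_gt (hlam : 1 / sig ^ 4 < lam) :
    MSElim sig sig' lam lam' = if 1 / (sig ^ 2 * sig' ^ 2) ≤ Real.sqrt (lam * lam') then
      sig ^ 4 * (1 - Real.sqrt (lam / lam')) ^ 2 + 2 / Real.sqrt (lam * lam') +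
        1 / (lam' ^ 2 * sig' ^ 4) +
        (2 * sig ^ 2 / (lam' * sig' ^ 2)) * (1 - Real.sqrt (lam / lam')) -
        2 / (lam * lam' * sig ^ 2 * sig' ^ 2)
      else sig ^ 4 := by
  rw [MSElim, if_neg (fun h => hlam.not_ge h.1)]
  simp only [hlam.le, true_and]

end MSElim

/-- For fixed `σ, λ > 0` the limiting mismatched MSE
`(λ',σ') ↦ MSE∞(σ,σ',λ,λ')` is continuous on `(0,∞)²`:
the phase transitions are continuous. -/
theorem mse_lim_continuousOn (sig lam : ℝ) (hsig : 0 < sig) (hlam : 0 < lam) :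
    ContinuousOn (fun p : ℝ × ℝ => MSElim sig p.2 lam p.1)
      (Set.Ioi 0 ×ˢ Set.Ioi 0) := by
  rcases le_or_gt lam (1 / sig ^ 4) with hc | hc
  · refine (ContinuousOn.if_le ?_ continuousOn_const ?_ continuous_fst.continuousOn
      fun p _ h => by rw [one_div_sqrt_sub_one_div_mul_sq_eq_zero h.symm]; ring).congr
      fun p hp => MSElim.eq_ite_of_le hsig.ne' (ne_of_gt hp.2) hc
    all_goals fun_prop (disch := rintro ⟨a, b⟩ ⟨ha : 0 < a, hb : 0 < b⟩; dsimp only; positivity)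
  · refine (ContinuousOn.if_le ?_ continuousOn_const ?_ ?_
      fun p hp h => MSElim.second_branch_eq_of_threshold hlam hp.1 h).congr
      fun p _ => MSElim.eq_ite_of_gt hc
    all_goals fun_prop (disch := rintro ⟨a, b⟩ ⟨ha : 0 < a, hb : 0 < b⟩; dsimp only; positivity)

end
end

section
/- For all σ, λ > 0 and all λ', σ' > 0, the limiting mismatched MSE formula is bounded below by the limiting MMSE: MSE∞(σ,σ',λ,λ') ≥ MMSE∞(σ,λ), with equality when λ' = λ and σ' = σ; i.e., the minimum over the statistician's parameters of the limiting mismatched MSE equals the limiting MMSE and is attained at the matched parameters. -/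
open MeasureTheory ProbabilityTheory Filter Matrix

noncomputable section

/-!
In the regime `λ ≥ 1/σ⁴` the MMSE formula is `2/λ - 1/(λ²σ⁴) = σ⁴ - (σ² - 1/(λσ²))²`, so it never
exceeds `σ⁴`, which is the value (or a lower bound of the value) of the mismatched formula in its
other two regimes. In the middle regime the mismatched formula is the MMSE formula plus the perfect
square `(σ²(1 - √(λ/λ')) + 1/(λ'σ'²) - 1/(λσ²))²`, which vanishes at `λ' = λ`, `σ' = σ`.
-/

lemma pos_of_one_div_pow_four_le {sig lam : ℝ} (hsig : sig ≠ 0) (h : 1 / sig ^ 4 ≤ lam) :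
    0 < lam :=
  lt_of_lt_of_le (by positivity) h

lemma MMSElim_eq_of_le {sig lam : ℝ} (hsig : sig ≠ 0) (h : 1 / sig ^ 4 ≤ lam) :
    MMSElim sig lam = 2 / lam - 1 / (lam ^ 2 * sig ^ 4) := by
  rw [MMSElim]
  split_ifs with h'
  · rw [le_antisymm h' h]
    field_simp
    ring
  · rfl

lemma MMSElim_le_pow_four {sig : ℝ} (hsig : sig ≠ 0) (lam : ℝ) : MMSElim sig lam ≤ sig ^ 4 := by
  rw [MMSElim]
  split_ifs with h
  · exact le_rfl
  · have hlam := (pos_of_one_div_pow_four_le hsig (not_le.1 h).le).ne'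
    have hsq : sig ^ 4 - (2 / lam - 1 / (lam ^ 2 * sig ^ 4)) =
        (sig ^ 2 - 1 / (lam * sig ^ 2)) ^ 2 := by
      field_simp
      ring
    linarith [sq_nonneg (sig ^ 2 - 1 / (lam * sig ^ 2))]

lemma sqrt_div_div_self {a : ℝ} (ha : 0 ≤ a) (b : ℝ) : √(a / b) / a = 1 / √(a * b) := by
  rw [Real.sqrt_div ha, Real.sqrt_mul ha]
  rcases eq_or_ne a 0 with rfl | h
  · simp
  · have : √a ≠ 0 := by positivity
    field_simp
    rw [Real.sq_sqrt ha]

lemma mse_formula_eq_mmse_formula_add_sq {sig lam : ℝ} (hsig : sig ≠ 0) (hlam : 0 < lam)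
    (sig' lam' : ℝ) :
    sig ^ 4 * (1 - √(lam / lam')) ^ 2 + 2 / √(lam * lam') + 1 / (lam' ^ 2 * sig' ^ 4) +
        (2 * sig ^ 2 / (lam' * sig' ^ 2)) * (1 - √(lam / lam')) -
        2 / (lam * lam' * sig ^ 2 * sig' ^ 2) =
      2 / lam - 1 / (lam ^ 2 * sig ^ 4) +
        (sig ^ 2 * (1 - √(lam / lam')) + 1 / (lam' * sig' ^ 2) - 1 / (lam * sig ^ 2)) ^ 2 := by
  rw [div_eq_mul_one_div 2 √(lam * lam'), ← sqrt_div_div_self hlam.le]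
  generalize √(lam / lam') = r
  -- `λ'` and `σ'` may vanish, so they are made to enter only through `a = 1/(λ'σ'²)`.
  have ha_sq : 1 / (lam' ^ 2 * sig' ^ 4) = (1 / (lam' * sig' ^ 2)) ^ 2 := by ring
  have ha_mul : 2 * sig ^ 2 / (lam' * sig' ^ 2) = 2 * sig ^ 2 * (1 / (lam' * sig' ^ 2)) := by ring
  have ha_div : 2 / (lam * lam' * sig ^ 2 * sig' ^ 2) =
      2 / (lam * sig ^ 2) * (1 / (lam' * sig' ^ 2)) := by
    ring
  rw [ha_sq, ha_mul, ha_div]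
  generalize 1 / (lam' * sig' ^ 2) = a
  field_simp
  ring

lemma MMSElim_le_MSElim {sig : ℝ} (hsig : sig ≠ 0) (sig' lam lam' : ℝ) :
    MMSElim sig lam ≤ MSElim sig sig' lam lam' := by
  rw [MSElim]
  split_ifs with h₁ h₂
  · exact (MMSElim_le_pow_four hsig lam).trans (le_add_of_nonneg_right (sq_nonneg _))
  · rw [MMSElim_eq_of_le hsig h₂.1,
      mse_formula_eq_mmse_formula_add_sq hsig (pos_of_one_div_pow_four_le hsig h₂.1)]
    exact le_add_of_nonneg_right (sq_nonneg _)
  · exact MMSElim_le_pow_four hsig lam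

lemma MSElim_self {sig : ℝ} (hsig : sig ≠ 0) (lam : ℝ) :
    MSElim sig sig lam lam = MMSElim sig lam := by
  rw [MSElim]
  split_ifs with h₁ h₂
  · have hlam : lam = (1 / sig ^ 2) ^ 2 := by rw [le_antisymm h₁.1 h₁.2]; ring
    rw [MMSElim, if_pos h₁.1, hlam, Real.sqrt_sq (by positivity)]
    field_simp
    ring
  · have hlam := pos_of_one_div_pow_four_le hsig h₂.1
    rw [MMSElim_eq_of_le hsig h₂.1, mse_formula_eq_mmse_formula_add_sq hsig hlam,
      div_self hlam.ne', Real.sqrt_one]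
    ring
  · rw [MMSElim, if_pos]
    by_contra h
    have hle : 1 / sig ^ 4 ≤ lam := (not_le.1 h).le
    refine h₂ ⟨hle, ?_⟩
    rw [Real.sqrt_mul_self (pos_of_one_div_pow_four_le hsig hle).le, ← pow_add]
    exact hle

theorem mse_lim_ge_mmse_lim_general (sig sig' lam lam' : ℝ)
    (hsig : 0 < sig) :
    MMSElim sig lam ≤ MSElim sig sig' lam lam' ∧
      MSElim sig sig lam lam = MMSElim sig lam :=
  ⟨MMSElim_le_MSElim hsig.ne' sig' lam lam', MSElim_self hsig.ne' lam⟩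

/-- The limiting mismatched MSE is bounded below by the limiting
MMSE, with equality at the matched parameters `λ' = λ`, `σ' = σ`. -/
theorem mse_lim_ge_mmse_lim (sig sig' lam lam' : ℝ)
    (hsig : 0 < sig) (hsig' : 0 < sig') (hlam : 0 < lam) (hlam' : 0 < lam') :
    MMSElim sig lam ≤ MSElim sig sig' lam lam' ∧
      MSElim sig sig lam lam = MMSElim sig lam :=
  mse_lim_ge_mmse_lim_general sig sig' lam lam' hsig

end
end

section
/- For σ = 1 and λ = 2, for every λ' ∈ (0,8) there exists σ' > 0 (namely σ'² = 1/(√(2λ') − λ'/2)) such that MSE∞(1,σ',2,λ') = 3/4 = MMSE∞(1,2); i.e., the statistician can achieve the Bayes-optimal MMSE at mismatched parameter values. -/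
/-! When `λσ⁴ > 1` the mismatched formula is a square completed in `u = 1/(λ'σ'²)`: writing
`r = √(λ/λ')`, so that `√(λλ') = rλ'`, it equals `(σ²(1 - r) + u)² + 2/(rλ') - 2u/(λσ²)`.
The choice `u = 1/(λσ²) - σ²(1 - r)` turns it into the MMSE `2/λ - 1/(λ²σ⁴)`, and this choice
automatically lies in the second regime. For `σ = 1`, `λ = 2` it reads
`σ'² = 1/(√(2λ') - λ'/2)`, which is positive exactly when `λ' < 8`. -/

open MeasureTheory ProbabilityTheory Filter Matrix

noncomputable section

section

variable {sig sig' lam lam' : ℝ}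

theorem MMSElim_of_lt (hlam : 1 / sig ^ 4 < lam) :
    MMSElim sig lam = 2 / lam - 1 / (lam ^ 2 * sig ^ 4) :=
  if_neg hlam.not_ge

theorem MSElim_of_lt_of_le (hlam : 1 / sig ^ 4 < lam)
    (hcross : 1 / (sig ^ 2 * sig' ^ 2) ≤ Real.sqrt (lam * lam')) :
    MSElim sig sig' lam lam' =
      sig ^ 4 * (1 - Real.sqrt (lam / lam')) ^ 2 + 2 / Real.sqrt (lam * lam') +
        1 / (lam' ^ 2 * sig' ^ 4) +
        (2 * sig ^ 2 / (lam' * sig' ^ 2)) * (1 - Real.sqrt (lam / lam')) -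
        2 / (lam * lam' * sig ^ 2 * sig' ^ 2) := by
  rw [MSElim, if_neg fun h => hlam.not_ge h.1, if_pos ⟨hlam.le, hcross⟩]

theorem MSElim_eq_MMSElim_of_inv_eq (hsig : sig ≠ 0) (hlam : 1 / sig ^ 4 < lam)
    (hlam' : 0 < lam')
    (hmatch : 1 / (lam' * sig' ^ 2) =
      1 / (lam * sig ^ 2) - sig ^ 2 * (1 - Real.sqrt (lam / lam'))) :
    MSElim sig sig' lam lam' = MMSElim sig lam := by
  have hlam0 : 0 < lam := lt_of_le_of_lt (by positivity) hlam
  obtain ⟨r, hr0, hr⟩ : ∃ r, 0 < r ∧ Real.sqrt (lam / lam') = r :=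
    ⟨_, Real.sqrt_pos.2 (by positivity), rfl⟩
  obtain ⟨u, hu⟩ : ∃ u, 1 / (lam' * sig' ^ 2) = u := ⟨_, rfl⟩
  have hlam_eq : lam = r ^ 2 * lam' := by
    rw [← hr, Real.sq_sqrt (by positivity)]
    field_simp
  have hq : Real.sqrt (lam * lam') = r * lam' := by
    rw [hlam_eq, show r ^ 2 * lam' * lam' = (r * lam') ^ 2 by ring]
    exact Real.sqrt_sq (by positivity)
  rw [hr, hu] at hmatch
  have hcross : 1 / (sig ^ 2 * sig' ^ 2) ≤ Real.sqrt (lam * lam') := by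
    have hinv_le : 1 / (lam * sig ^ 2) ≤ sig ^ 2 := by
      rw [div_le_iff₀ (by positivity)]
      rw [div_lt_iff₀ (by positivity)] at hlam
      nlinarith
    have hcross_eq : 1 / (sig ^ 2 * sig' ^ 2) = lam' * u / sig ^ 2 := by
      rw [← hu]
      field_simp
    rw [hcross_eq, hq, div_le_iff₀ (by positivity)]
    nlinarith
  have hsq : 1 / (lam' ^ 2 * sig' ^ 4) = u ^ 2 := by rw [← hu]; ring
  have hlin : 2 * sig ^ 2 / (lam' * sig' ^ 2) = 2 * sig ^ 2 * u := by rw [← hu]; ring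
  have hlast : 2 / (lam * lam' * sig ^ 2 * sig' ^ 2) = 2 * u / (lam * sig ^ 2) := by
    rw [← hu]; ring
  rw [MSElim_of_lt_of_le hlam hcross, MMSElim_of_lt hlam, hq, hr, hsq, hlin, hlast, hmatch,
    hlam_eq]
  field_simp
  ring

end

theorem sqrt_two_mul_sub_half_pos {x : ℝ} (hx : 0 < x) (hx8 : x < 8) :
    0 < Real.sqrt (2 * x) - x / 2 := by
  have hsq : Real.sqrt (2 * x) ^ 2 = 2 * x := Real.sq_sqrt (by positivity)
  nlinarith [Real.sqrt_nonneg (2 * x)]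

theorem sqrt_div_eq_sqrt_mul_div (a : ℝ) {x : ℝ} (hx : 0 < x) :
    Real.sqrt (a / x) = Real.sqrt (a * x) / x := by
  rw [show a / x = a * x / x ^ 2 by field_simp, Real.sqrt_div' _ (by positivity),
    Real.sqrt_sq hx.le]

/-- For `σ = 1, λ = 2` and any `λ' ∈ (0,8)`, choosing
`σ'² = 1/(√(2λ') − λ'/2)` achieves the Bayes-optimal MMSE `3/4` at mismatched
parameters. -/
theorem mmse_achievable_at_mismatched_parameters :
    ∀ lam' ∈ Set.Ioo (0 : ℝ) 8, ∃ sig' : ℝ, 0 < sig' ∧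
      sig' ^ 2 = 1 / (Real.sqrt (2 * lam') - lam' / 2) ∧
      MSElim 1 sig' 2 lam' = 3 / 4 ∧ MMSElim 1 2 = 3 / 4 := by
  rintro lam' ⟨hpos, hlt⟩
  have hgap := sqrt_two_mul_sub_half_pos hpos hlt
  have hsq : Real.sqrt (1 / (Real.sqrt (2 * lam') - lam' / 2)) ^ 2 =
      1 / (Real.sqrt (2 * lam') - lam' / 2) := Real.sq_sqrt (by positivity)
  have hmmse : MMSElim 1 2 = 3 / 4 := by
    rw [MMSElim_of_lt (by norm_num)]
    norm_num
  refine ⟨_, Real.sqrt_pos.2 (by positivity), hsq, ?_, hmmse⟩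
  rw [MSElim_eq_MMSElim_of_inv_eq one_ne_zero (by norm_num) hpos, hmmse]
  rw [hsq, sqrt_div_eq_sqrt_mul_div 2 hpos]
  field_simp
  ring

end
end

section
/- Let σ' > σ > 0. Then the matched-SNR limiting MSE λ ↦ MSE∞(σ,σ',λ,λ), which on the interval 1/σ'⁴ ≤ λ ≤ 1/σ⁴ equals σ⁴ + 1/λ − (1/(λ^{3/2}σ'²))·(2 − 1/(√λ σ'²)), is strictly increasing in λ on the interval (1/σ'⁴, min(4/σ'⁴, 1/σ⁴)); i.e., when the statistician overestimates the prior variance, the limiting MSE can increase as the true SNR increases. -/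
open MeasureTheory ProbabilityTheory Filter Matrix

noncomputable section

open Set

/-!
On `[1/σ'⁴, 1/σ⁴]` the matched MSE is `σ⁴ + g(λ)²` with `g(λ) = t - t²/σ'²` for `t = 1/√λ`.
The parabola `t ↦ t - t²/σ'²` is nonnegative on `[0, σ'²]` and strictly decreasing beyond its
vertex `σ'²/2`; since `t` decreases in `λ` and `λ ∈ [1/σ'⁴, 4/σ'⁴]` means `t ∈ [σ'²/2, σ'²]`,
`g` is nonnegative and strictly increasing there, hence so is `g²`.
-/

lemma sq_one_div_sqrt_sub_one_div_mul {lam : ℝ} (hlam : 0 < lam) (s : ℝ) :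
    (1 / √lam - 1 / (lam * s)) ^ 2 =
      1 / lam - 1 / (lam ^ ((3 : ℝ) / 2) * s) * (2 - 1 / (√lam * s)) := by
  obtain ⟨t, ht, rfl⟩ : ∃ t, 0 < t ∧ lam = t ^ 2 :=
    ⟨√lam, Real.sqrt_pos.2 hlam, (Real.sq_sqrt hlam.le).symm⟩
  have h32 : (t ^ 2) ^ ((3 : ℝ) / 2) = t ^ 3 := by
    rw [← Real.rpow_natCast, ← Real.rpow_mul ht.le]
    norm_num
  rw [Real.sqrt_sq ht.le, h32]
  field_simp
  ring

section Parabola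

variable {s : ℝ}

lemma sub_sq_div_nonneg (hs : 0 < s) {t : ℝ} (ht : t ∈ Icc 0 s) : 0 ≤ t - t ^ 2 / s := by
  have hfactor : t - t ^ 2 / s = t * (s - t) / s := by field_simp
  rw [hfactor]
  exact div_nonneg (mul_nonneg ht.1 (sub_nonneg.2 ht.2)) hs.le

lemma strictAntiOn_sub_sq_div (hs : 0 < s) :
    StrictAntiOn (fun t => t - t ^ 2 / s) (Ici (s / 2)) := by
  intro a ha b hb hab
  rw [mem_Ici] at ha hb
  have hfactor : b - b ^ 2 / s - (a - a ^ 2 / s) = (b - a) * (s - (a + b)) / s := by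
    field_simp
    ring
  have hneg : (b - a) * (s - (a + b)) / s < 0 :=
    div_neg_of_neg_of_pos (mul_neg_of_pos_of_neg (by linarith) (by linarith)) hs
  dsimp only
  linarith

lemma one_div_sqrt_mem_Icc (hs : 0 < s) {lam : ℝ} (hlam : lam ∈ Icc (1 / s ^ 2) (4 / s ^ 2)) :
    1 / √lam ∈ Icc (s / 2) s := by
  have hlow : 1 / s ≤ √lam := by
    rw [Real.le_sqrt' (by positivity), _root_.one_div_pow]
    exact hlam.1
  have hupp : √lam ≤ 2 / s := by
    rw [Real.sqrt_le_left (by positivity), div_pow]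
    norm_num [hlam.2]
  constructor
  · calc s / 2 = 1 / (2 / s) := by field_simp
      _ ≤ 1 / √lam := one_div_le_one_div_of_le (lt_of_lt_of_le (by positivity) hlow) hupp
  · calc 1 / √lam ≤ 1 / (1 / s) := one_div_le_one_div_of_le (by positivity) hlow
      _ = s := one_div_one_div s

lemma strictMonoOn_sq_one_div_sqrt_sub_one_div_mul (hs : 0 < s) :
    StrictMonoOn (fun lam => (1 / √lam - 1 / (lam * s)) ^ 2) (Icc (1 / s ^ 2) (4 / s ^ 2)) := by
  have hparabola : ∀ lam ∈ Icc (1 / s ^ 2) (4 / s ^ 2),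
      1 / √lam - 1 / (lam * s) = 1 / √lam - (1 / √lam) ^ 2 / s := by
    intro lam hlam
    rw [div_pow, Real.sq_sqrt (le_trans (by positivity) hlam.1)]
    field_simp
  intro a ha b hb hab
  have hta := one_div_sqrt_mem_Icc hs ha
  have htb := one_div_sqrt_mem_Icc hs hb
  have hab' : 1 / √b < 1 / √a :=
    one_div_lt_one_div_of_lt (Real.sqrt_pos.2 (lt_of_lt_of_le (by positivity) ha.1))
      (Real.sqrt_lt_sqrt (le_trans (by positivity) ha.1) hab)
  simp only [hparabola a ha, hparabola b hb]
  exact pow_lt_pow_left₀ (strictAntiOn_sub_sq_div hs htb.1 hta.1 hab')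
    (sub_sq_div_nonneg hs ⟨le_trans (by positivity) hta.1, hta.2⟩) two_ne_zero

end Parabola

lemma MSElim_self_of_mem_Icc {sig sig' lam : ℝ} (hlam : lam ∈ Icc (1 / sig' ^ 4) (1 / sig ^ 4)) :
    MSElim sig sig' lam lam = sig ^ 4 + (1 / √lam - 1 / (lam * sig' ^ 2)) ^ 2 := by
  rw [MSElim, if_pos ⟨hlam.2, hlam.1⟩]

/-- For `σ' > σ > 0`, the matched-SNR limiting MSE
`λ ↦ MSE∞(σ,σ',λ,λ)` equals `σ⁴ + 1/λ − (1/(λ^{3/2}σ'²))(2 − 1/(√λ σ'²))` on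
`[1/σ'⁴, 1/σ⁴]` and is strictly increasing on `(1/σ'⁴, min(4/σ'⁴, 1/σ⁴))`. -/
theorem matched_mse_increasing_in_snr (sig sig' : ℝ)
    (hsig : 0 < sig) (hlt : sig < sig') :
    (∀ lam : ℝ, 1 / sig' ^ 4 ≤ lam → lam ≤ 1 / sig ^ 4 →
        MSElim sig sig' lam lam =
          sig ^ 4 + 1 / lam -
            (1 / (lam ^ ((3 : ℝ) / 2) * sig' ^ 2)) *
              (2 - 1 / (Real.sqrt lam * sig' ^ 2))) ∧
      StrictMonoOn (fun lam => MSElim sig sig' lam lam)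
        (Set.Ioo (1 / sig' ^ 4) (min (4 / sig' ^ 4) (1 / sig ^ 4))) := by
  have hs : 0 < sig' ^ 2 := by
    have := hsig.trans hlt
    positivity
  have hs4 : sig' ^ 4 = (sig' ^ 2) ^ 2 := by ring
  refine ⟨fun lam h1 h2 => ?_, fun a ha b hb hab => ?_⟩
  · have hlam : 0 < lam := lt_of_lt_of_le (by rw [hs4]; positivity) h1
    rw [MSElim_self_of_mem_Icc ⟨h1, h2⟩, sq_one_div_sqrt_sub_one_div_mul hlam, add_sub_assoc]
  · simp only [mem_Ioo, lt_min_iff] at ha hb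
    dsimp only
    rw [MSElim_self_of_mem_Icc ⟨ha.1.le, ha.2.2.le⟩, MSElim_self_of_mem_Icc ⟨hb.1.le, hb.2.2.le⟩]
    rw [hs4] at ha hb
    exact add_lt_add_right (strictMonoOn_sq_one_div_sqrt_sub_one_div_mul hs
      ⟨ha.1.le, ha.2.1.le⟩ ⟨hb.1.le, hb.2.1.le⟩ hab) _

end
end
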